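/- arXiv:1610.01900 — 8 statements merged into one kernel-verified Lean document; each statement's English description precedes it below -/
import Mathlib

section
/- Let S be a finite set with |S| ≥ 3, d a metric on S, and N the Kantorovich–Rubinstein norm on the zero-sum hyperplane H ⊂ ℝ^S induced by the 1-Wasserstein distance. Fix r ∈ S and consider the region S_r = {v ∈ H : v_r ≤ 0 and v_{r'} ≥ 0 for all r' ≠ r}. Then on S_r, N is given by the linear formula N(v) = Σ_{r'≠r} v_{r'} · d(r, r'). -/
/-- The Kantorovich–Rubinstein norm on the zero-sum hyperplane of `ℝ^S`: the optimal cost of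
transporting the positive part `v⁺` of `v` onto its negative part `v⁻`, with ground cost `d`. -/
noncomputable def KR {S : Type*} [Fintype S] (d : S → S → ℝ) (v : S → ℝ) : ℝ :=
  sInf {c | ∃ A : S → S → ℝ, (∀ r r', 0 ≤ A r r') ∧
    (∀ r, ∑ r', A r r' = max (v r) 0) ∧
    (∀ r', ∑ r, A r r' = max (-v r') 0) ∧
    c = ∑ r, ∑ r', A r r' * d r r'}

/-- On the region `S_r = {v ∈ H : v r ≤ 0, v r' ≥ 0 for r' ≠ r}`, the Kantorovich–Rubinstein
norm is given by the linear formula `N(v) = ∑_{r'≠r} v_{r'} d(r,r')`. -/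
theorem stmt7 {S : Type*} [Fintype S] [DecidableEq S] (hcard : 3 ≤ Fintype.card S)
    (d : S → S → ℝ)
    (hd0 : ∀ r r', 0 ≤ d r r') (hdrefl : ∀ r, d r r = 0)
    (hdsymm : ∀ r r', d r r' = d r' r)
    (hdtri : ∀ r r' r'', d r r'' ≤ d r r' + d r' r'')
    (hdsep : ∀ r r', d r r' = 0 → r = r')
    (r : S) (v : S → ℝ) (hsum : ∑ s, v s = 0)
    (hvr : v r ≤ 0) (hvpos : ∀ r' ≠ r, 0 ≤ v r') :
    KR d v = ∑ r' ∈ Finset.univ.erase r, v r' * d r r' := by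
  set c₀ := ∑ r' ∈ Finset.univ.erase r, v r' * d r r' with hc₀
  have hmaxr : max (v r) 0 = 0 := max_eq_right hvr
  have hmaxs : ∀ s, s ≠ r → max (v s) 0 = v s := fun s hs => max_eq_left (hvpos s hs)
  have hmaxneg : ∀ s, s ≠ r → max (-v s) 0 = 0 :=
    fun s hs => max_eq_right (neg_nonpos.mpr (hvpos s hs))
  have hsumerase : ∑ s ∈ Finset.univ.erase r, v s = -v r := by
    have := Finset.add_sum_erase Finset.univ v (Finset.mem_univ r)
    linarith [hsum, this]
  have hmaxnegr : max (-v r) 0 = -v r := max_eq_left (neg_nonneg.mpr hvr)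
  have hsummax : ∑ s, max (v s) 0 = -v r := by
    rw [← Finset.add_sum_erase Finset.univ (fun s => max (v s) 0) (Finset.mem_univ r), hmaxr]
    rw [Finset.sum_congr rfl (fun s hs => hmaxs s (Finset.ne_of_mem_erase hs))]
    simpa using hsumerase
  have hcost : ∑ s, max (v s) 0 * d s r = c₀ := by
    rw [← Finset.add_sum_erase Finset.univ (fun s => max (v s) 0 * d s r) (Finset.mem_univ r),
      hmaxr]
    rw [Finset.sum_congr rfl
      (fun s hs => by rw [hmaxs s (Finset.ne_of_mem_erase hs), hdsymm s r])]
    simp [hc₀]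
  have key : {c | ∃ A : S → S → ℝ, (∀ r r', 0 ≤ A r r') ∧
      (∀ r, ∑ r', A r r' = max (v r) 0) ∧
      (∀ r', ∑ r, A r r' = max (-v r') 0) ∧
      c = ∑ r, ∑ r', A r r' * d r r'} = {c₀} := by
    ext c
    simp only [Set.mem_setOf_eq, Set.mem_singleton_iff]
    constructor
    · rintro ⟨A, hA0, hrow, hcol, rfl⟩
      have hz : ∀ s t, t ≠ r → A s t = 0 := by
        intro s t ht
        have hsum0 : ∑ s, A s t = 0 := by rw [hcol, hmaxneg t ht]
        exact (Finset.sum_eq_zero_iff_of_nonneg (fun i _ => hA0 i t)).mp hsum0 s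
          (Finset.mem_univ s)
      have hAr : ∀ s, A s r = max (v s) 0 := by
        intro s
        rw [← hrow s, Finset.sum_eq_single_of_mem r (Finset.mem_univ r)
          (fun t _ ht => hz s t ht)]
      calc ∑ s, ∑ t, A s t * d s t
          = ∑ s, A s r * d s r := by
            refine Finset.sum_congr rfl fun s _ => ?_
            rw [Finset.sum_eq_single_of_mem r (Finset.mem_univ r)
              (fun t _ ht => by rw [hz s t ht, zero_mul])]
        _ = ∑ s, max (v s) 0 * d s r := by
            exact Finset.sum_congr rfl fun s _ => by rw [hAr s]
        _ = c₀ := hcost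
    · rintro rfl
      refine ⟨fun s t => if t = r then max (v s) 0 else 0, ?_, ?_, ?_, ?_⟩
      · intro s t; dsimp only; split
        · exact le_max_right _ _
        · exact le_refl 0
      · intro s; simp
      · intro t
        by_cases ht : t = r
        · subst ht; simpa [hmaxnegr] using hsummax
        · simp [ht, hmaxneg t ht]
      · rw [← hcost]
        refine Finset.sum_congr rfl fun s _ => ?_
        rw [Finset.sum_eq_single_of_mem r (Finset.mem_univ r)
          (fun t _ ht => by simp [ht])]
        simp
  rw [KR, key, csInf_singleton]
end

section
/- The Kantorovich–Rubinstein norm N induced on the zero-sum hyperplane H by the 1-Wasserstein distance (with ground metric d on a finite set S with at least 3 points, d not identically 0 off the diagonal) is not strictly convex: its unit sphere contains a nondegenerate line segment. -/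
open Finset

section
variable {S : Type*} [Fintype S]

lemma sum_max_mul_eq_sum_erase [DecidableEq S] {v : S → ℝ} {c : S}
    (hv : ∀ r, r ≠ c → 0 ≤ v r) (hvc : v c ≤ 0) (w : S → ℝ) :
    ∑ r, max (v r) 0 * w r = ∑ r ∈ univ.erase c, v r * w r := by
  rw [← add_sum_erase _ _ (mem_univ c), max_eq_right hvc, zero_mul, zero_add]
  exact sum_congr rfl fun r hr => by rw [max_eq_left (hv r (ne_of_mem_erase hr))]

lemma transport_cost_eq_of_nonneg_off {d : S → S → ℝ} {v : S → ℝ} {c : S}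
    (hv : ∀ r, r ≠ c → 0 ≤ v r) {A : S → S → ℝ} (hA : ∀ r r', 0 ≤ A r r')
    (hrow : ∀ r, ∑ r', A r r' = max (v r) 0) (hcol : ∀ r', ∑ r, A r r' = max (-v r') 0) :
    ∑ r, ∑ r', A r r' * d r r' = ∑ r, max (v r) 0 * d r c := by
  have hA_off : ∀ r r', r' ≠ c → A r r' = 0 := fun r r' hr' =>
    (sum_eq_zero_iff_of_nonneg fun i _ => hA i r').mp
      (by rw [hcol r', max_eq_right (neg_nonpos.mpr (hv r' hr'))]) r (mem_univ r)
  refine sum_congr rfl fun r _ => ?_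
  rw [← hrow r, sum_eq_single c (fun r' _ hr' => by rw [hA_off r r' hr', zero_mul]) (by simp),
    sum_eq_single c (fun r' _ hr' => hA_off r r' hr') (by simp)]

lemma KR_eq_sum_erase_of_nonneg_off [DecidableEq S] (d : S → S → ℝ) {v : S → ℝ} {c : S}
    (hsum : ∑ r, v r = 0) (hv : ∀ r, r ≠ c → 0 ≤ v r) :
    KR d v = ∑ r ∈ univ.erase c, v r * d r c := by
  have hsum_erase : ∑ r ∈ univ.erase c, v r = -v c := by
    rw [← add_sum_erase _ _ (mem_univ c)] at hsum
    linarith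
  have hvc : v c ≤ 0 := by
    have := sum_nonneg fun r (hr : r ∈ univ.erase c) => hv r (ne_of_mem_erase hr)
    linarith
  rw [← sum_max_mul_eq_sum_erase hv hvc, KR]
  refine (congrArg sInf (?_ : _ = {∑ r, max (v r) 0 * d r c})).trans (csInf_singleton _)
  refine Set.eq_singleton_iff_unique_mem.mpr ⟨?_, ?_⟩
  · refine ⟨fun r r' => if r' = c then max (v r) 0 else 0, fun r r' => ?_, fun r => ?_,
      fun r' => ?_, ?_⟩
    · dsimp only
      split_ifs <;> simp
    · simp
    · by_cases hr' : r' = c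
      · subst hr'
        have := sum_max_mul_eq_sum_erase hv hvc 1
        simp only [Pi.one_apply, mul_one] at this
        simp [this, hsum_erase, max_eq_left (neg_nonneg.mpr hvc)]
      · simp [hr', max_eq_right (neg_nonpos.mpr (hv r' hr'))]
    · simp
  · rintro _ ⟨A, hA, hrow, hcol, rfl⟩
    exact transport_cost_eq_of_nonneg_off hv hA hrow hcol

end

section
variable {S : Type*} [DecidableEq S]

def dipole (a c : S) : S → ℝ := Pi.single a 1 - Pi.single c 1

variable [Fintype S]

lemma sum_dipole (a c : S) : ∑ r, dipole a c r = 0 := by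
  simp [dipole, sum_sub_distrib]

lemma sum_erase_dipole_mul {a c : S} (hac : a ≠ c) (w : S → ℝ) :
    ∑ r ∈ univ.erase c, dipole a c r * w r = w a := by
  rw [sum_eq_single_of_mem a (mem_erase.2 ⟨hac, mem_univ a⟩)]
  · simp [dipole, hac]
  · intro r hr hra
    simp [dipole, hra, ne_of_mem_erase hr]

lemma KR_smul_dipole_add_smul_dipole (d : S → S → ℝ) {a b c : S} (hac : a ≠ c) (hbc : b ≠ c)
    {α β : ℝ} (hα : 0 ≤ α) (hβ : 0 ≤ β) :
    KR d (α • dipole a c + β • dipole b c) = α * d a c + β * d b c := by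
  rw [KR_eq_sum_erase_of_nonneg_off d (c := c)]
  · simp only [Pi.add_apply, Pi.smul_apply, smul_eq_mul, add_mul, mul_assoc, sum_add_distrib,
      ← mul_sum, sum_erase_dipole_mul hac, sum_erase_dipole_mul hbc]
  · simp [sum_add_distrib, ← mul_sum, sum_dipole]
  · intro r hr
    simp only [dipole, Pi.add_apply, Pi.smul_apply, Pi.sub_apply, smul_eq_mul, Pi.single_apply,
      hr, if_false, sub_zero]
    positivity
end

theorem stmt8_general {S : Type*} [Fintype S] (hcard : 3 ≤ Fintype.card S)
    (d : S → S → ℝ)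
    (hd0 : ∀ r r', 0 ≤ d r r')
    (hdsep : ∀ r r', d r r' = 0 → r = r') :
    ∃ u v : S → ℝ, u ≠ v ∧ (∑ s, u s = 0) ∧ (∑ s, v s = 0) ∧
      KR d u = 1 ∧ KR d v = 1 ∧
      ∀ t : ℝ, 0 ≤ t → t ≤ 1 → KR d ((1 - t) • u + t • v) = 1 := by
  classical
  obtain ⟨a, b, c, hab, hac, hbc⟩ := Fintype.two_lt_card_iff.mp hcard
  have hdac : 0 < d a c := (hd0 a c).lt_of_ne' fun h => hac (hdsep a c h)
  have hdbc : 0 < d b c := (hd0 b c).lt_of_ne' fun h => hbc (hdsep b c h)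
  set u := (d a c)⁻¹ • dipole a c
  set v := (d b c)⁻¹ • dipole b c
  have hsegment : ∀ t : ℝ, 0 ≤ t → t ≤ 1 → KR d ((1 - t) • u + t • v) = 1 := by
    intro t ht0 ht1
    have h1t : 0 ≤ 1 - t := by linarith
    rw [smul_smul, smul_smul, KR_smul_dipole_add_smul_dipole d hac hbc (by positivity)
      (by positivity)]
    field_simp
    ring
  have huv : u a ≠ v a := by simp [u, v, dipole, hab, hac, hdac.ne']
  refine ⟨u, v, fun h => huv (congrFun h a), by simp [u, ← mul_sum, sum_dipole],
    by simp [v, ← mul_sum, sum_dipole], by simpa using hsegment 0 le_rfl zero_le_one,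
    by simpa using hsegment 1 zero_le_one le_rfl, hsegment⟩

/-- The Kantorovich–Rubinstein norm on the zero-sum hyperplane (ground metric `d` on a finite
set with at least 3 points, `d` not identically zero off the diagonal) is not strictly convex:
its unit sphere contains a nondegenerate line segment. -/
theorem stmt8 {S : Type*} [Fintype S] (hcard : 3 ≤ Fintype.card S)
    (d : S → S → ℝ)
    (hd0 : ∀ r r', 0 ≤ d r r') (hdrefl : ∀ r, d r r = 0)
    (hdsymm : ∀ r r', d r r' = d r' r)
    (hdtri : ∀ r r' r'', d r r'' ≤ d r r' + d r' r'')
    (hdsep : ∀ r r', d r r' = 0 → r = r')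
    (hdne : ∃ s t : S, s ≠ t ∧ d s t ≠ 0) :
    ∃ u v : S → ℝ, u ≠ v ∧ (∑ s, u s = 0) ∧ (∑ s, v s = 0) ∧
      KR d u = 1 ∧ KR d v = 1 ∧
      ∀ t : ℝ, 0 ≤ t → t ≤ 1 → KR d ((1 - t) • u + t • v) = 1 :=
  stmt8_general hcard d hd0 hdsep
end

section
/- Let x, y ∈ ℝ^M and let d_1 denote the ℓ^1 metric. The bisector bis(x,y) = {z : ‖x−z‖_1 = ‖y−z‖_1} contains an open ball if and only if there exist signs ε_i ∈ {−1, +1} such that Σ_i ε_i (x_i − y_i) = 0. -/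
private lemma key1 {a b r : ℝ} (hr : 0 < r) (hb : b ≠ 0)
    (H : ∀ t : ℝ, |t| < r → |a - t| - |a| = |b - t| - |b|) (ha : 0 < a) : 0 < b := by
  by_contra hb'
  have hbneg : b < 0 := lt_of_le_of_ne (not_lt.1 hb') hb
  set t := min a (min (-b) r) / 2 with ht
  have ht0 : 0 < t := by
    have := lt_min ha (lt_min (by linarith : (0:ℝ) < -b) hr)
    rw [ht]; linarith
  have hta : t < a := by
    have : t ≤ a / 2 := by
      apply div_le_div_of_nonneg_right ?_ ?_ <;> simp [le_refl]
    linarith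
  have htb : t < -b := by
    have : t ≤ -b / 2 := by
      apply div_le_div_of_nonneg_right ?_ ?_
      · exact le_trans (min_le_right _ _) (min_le_left _ _)
      · norm_num
    linarith
  have htr : t < r := by
    have : t ≤ r / 2 := by
      apply div_le_div_of_nonneg_right ?_ ?_
      · exact le_trans (min_le_right _ _) (min_le_right _ _)
      · norm_num
    linarith
  have := H t (by rwa [abs_of_pos ht0])
  rw [abs_of_pos ha, abs_of_pos (by linarith : 0 < a - t), abs_of_neg hbneg,
    abs_of_neg (by linarith : b - t < 0)] at this
  linarith

private lemma key {a b r : ℝ} (hr : 0 < r) (ha : a ≠ 0) (hb : b ≠ 0)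
    (H : ∀ t : ℝ, |t| < r → |a - t| - |a| = |b - t| - |b|) : (0 < a ↔ 0 < b) :=
  ⟨key1 hr hb H, key1 hr ha (fun t ht => (H t ht).symm)⟩

/-- The `ℓ^1` bisector of `x` and `y` in `ℝ^M` contains an open ball if and only if there is a
choice of signs `ε_i = ±1` with `∑ ε_i (x_i − y_i) = 0`. -/
theorem stmt9 (M : ℕ) (x y : Fin M → ℝ) :
    (∃ (z : Fin M → ℝ) (ρ : ℝ), 0 < ρ ∧
        Metric.ball z ρ ⊆ {w : Fin M → ℝ | ∑ i, |x i - w i| = ∑ i, |y i - w i|}) ↔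
      ∃ ε : Fin M → ℝ, (∀ i, ε i = 1 ∨ ε i = -1) ∧ ∑ i, ε i * (x i - y i) = 0 := by
  constructor
  · rintro ⟨z, ρ, hρ, hsub⟩
    -- choose δ ∈ (0, ρ) avoiding finitely many bad values
    have hinf : (Set.Ioo (0:ℝ) ρ).Infinite := Set.Ioo_infinite hρ
    set S : Set ℝ := (Set.range fun i => x i - z i) ∪ (Set.range fun i => y i - z i) with hS
    have hSfin : S.Finite := (Set.finite_range _).union (Set.finite_range _)
    obtain ⟨δ, hδ⟩ := (hinf.diff hSfin).nonempty
    obtain ⟨⟨hδ0, hδρ⟩, hδS⟩ := hδ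
    set w : Fin M → ℝ := fun j => z j + δ with hwdef
    have hwball : w ∈ Metric.ball z ρ := by
      rw [Metric.mem_ball, dist_pi_lt_iff hρ]
      intro j
      rw [Real.dist_eq, hwdef]
      simp [abs_of_pos hδ0, hδρ]
    have hxw : ∀ i, x i - w i ≠ 0 := by
      intro i h
      refine hδS (Set.mem_union_left _ (Set.mem_range.2 ⟨i, ?_⟩))
      simp only [hwdef] at h; linarith
    have hyw : ∀ i, y i - w i ≠ 0 := by
      intro i h
      refine hδS (Set.mem_union_right _ (Set.mem_range.2 ⟨i, ?_⟩))
      simp only [hwdef] at h; linarith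
    have hweq : ∑ i, |x i - w i| = ∑ i, |y i - w i| := hsub hwball
    -- perturbation in coordinate i
    have hpert : ∀ i, ∀ t : ℝ, |t| < ρ - δ →
        |(x i - w i) - t| - |x i - w i| = |(y i - w i) - t| - |y i - w i| := by
      intro i t ht
      set w' := Function.update w i (w i + t) with hw'
      have hball' : w' ∈ Metric.ball z ρ := by
        rw [Metric.mem_ball, dist_pi_lt_iff hρ]
        intro j
        rcases eq_or_ne j i with rfl | hj
        · rw [hw', Function.update_self, Real.dist_eq, hwdef]
          have := abs_lt.1 ht
          simp only
          rw [show z j + δ + t - z j = δ + t by ring]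
          rcases abs_lt.2 ⟨(this.1), this.2⟩ |>.le with _
          have : |δ + t| ≤ δ + |t| := by
            calc |δ + t| ≤ |δ| + |t| := abs_add_le _ _
            _ = δ + |t| := by rw [abs_of_pos hδ0]
          linarith [abs_lt.1 ht]
        · rw [hw', Function.update_of_ne hj, Real.dist_eq, hwdef]
          simp [abs_of_pos hδ0]
          linarith
      have hweq' : ∑ j, |x j - w' j| = ∑ j, |y j - w' j| := hsub hball'
      have hx : ∑ j, (|x j - w' j| - |x j - w j|) = |(x i - w i) - t| - |x i - w i| := by
        rw [Finset.sum_eq_single i]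
        · rw [hw', Function.update_self]; ring_nf
        · intro j _ hj
          rw [hw', Function.update_of_ne hj]; ring
        · simp
      have hy : ∑ j, (|x j - w' j| - |x j - w j|) = ∑ j, (|y j - w' j| - |y j - w j|) := by
        rw [Finset.sum_sub_distrib, Finset.sum_sub_distrib, hweq, hweq']
      have hy2 : ∑ j, (|y j - w' j| - |y j - w j|) = |(y i - w i) - t| - |y i - w i| := by
        rw [Finset.sum_eq_single i]
        · rw [hw', Function.update_self]; ring_nf
        · intro j _ hj
          rw [hw', Function.update_of_ne hj]; ring
        · simp
      rw [← hx, hy, hy2]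
    have hsamesign : ∀ i, (0 < x i - w i ↔ 0 < y i - w i) := fun i =>
      key (by linarith : (0:ℝ) < ρ - δ) (hxw i) (hyw i) (hpert i)
    refine ⟨fun i => if 0 < x i - w i then 1 else -1, fun i => by by_cases h : 0 < x i - w i <;> simp [h], ?_⟩
    have hterm : ∀ i, (if 0 < x i - w i then (1:ℝ) else -1) * (x i - y i)
        = |x i - w i| - |y i - w i| := by
      intro i
      by_cases h : 0 < x i - w i
      · have h2 : 0 < y i - w i := (hsamesign i).1 h
        rw [if_pos h, abs_of_pos h, abs_of_pos h2]; ring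
      · have h1 : x i - w i < 0 := lt_of_le_of_ne (not_lt.1 h) (hxw i)
        have h2 : y i - w i < 0 := by
          by_contra h3
          exact h ((hsamesign i).2 (lt_of_le_of_ne (not_lt.1 h3) (Ne.symm (hyw i))))
        rw [if_neg h, abs_of_neg h1, abs_of_neg h2]; ring
    rw [Finset.sum_congr rfl (fun i _ => hterm i), Finset.sum_sub_distrib, hweq, sub_self]
  · rintro ⟨ε, hε, hsum⟩
    refine ⟨fun i => if ε i = 1 then -(|x i| + |y i| + 2) else (|x i| + |y i| + 2), 1,
      one_pos, ?_⟩
    intro w hw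
    simp only [Set.mem_setOf_eq]
    have hw' : ∀ i, |w i - (if ε i = 1 then -(|x i| + |y i| + 2) else (|x i| + |y i| + 2))| < 1 := by
      intro i
      have := (dist_pi_lt_iff one_pos).1 (Metric.mem_ball.1 hw) i
      rwa [Real.dist_eq] at this
    have hkey : ∀ i, |x i - w i| - |y i - w i| = ε i * (x i - y i) := by
      intro i
      have h := hw' i
      rcases hε i with h1 | h1
      · rw [if_pos h1] at h
        have hb := abs_lt.1 h
        have hx1 : w i < x i := by
          have := abs_le.1 (le_refl |x i|)
          nlinarith [abs_nonneg (x i), abs_nonneg (y i), neg_abs_le (x i)]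
        have hy1 : w i < y i := by
          nlinarith [abs_nonneg (x i), abs_nonneg (y i), neg_abs_le (y i)]
        rw [abs_of_pos (by linarith), abs_of_pos (by linarith), h1]
        ring
      · rw [if_neg (by rw [h1]; norm_num)] at h
        have hb := abs_lt.1 h
        have hx1 : x i < w i := by
          nlinarith [abs_nonneg (x i), abs_nonneg (y i), le_abs_self (x i)]
        have hy1 : y i < w i := by
          nlinarith [abs_nonneg (x i), abs_nonneg (y i), le_abs_self (y i)]
        rw [abs_of_neg (by linarith), abs_of_neg (by linarith), h1]
        ring
    have : ∑ i, (|x i - w i| - |y i - w i|) = 0 := by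
      rw [Finset.sum_congr rfl (fun i _ => hkey i)]; exact hsum
    rw [Finset.sum_sub_distrib] at this
    linarith
end

section
/- If x, y ∈ ℝ^M and no choice of signs ε_i ∈ {−1,+1} makes Σ_i ε_i (x_i − y_i) = 0, then the ℓ^1-bisector {z : ‖x−z‖_1 = ‖y−z‖_1} is contained in a finite union of affine hyperplanes of ℝ^M (in particular it has empty interior). -/
/-- If no choice of signs `ε_i = ±1` makes `∑ ε_i (x_i − y_i) = 0`, then the `ℓ^1` bisector of
`x` and `y` is contained in a finite union of affine hyperplanes of `ℝ^M`. -/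
theorem stmt10 (M : ℕ) (x y : Fin M → ℝ)
    (h : ¬ ∃ ε : Fin M → ℝ, (∀ i, ε i = 1 ∨ ε i = -1) ∧ ∑ i, ε i * (x i - y i) = 0) :
    ∃ F : Finset ((Fin M → ℝ) × ℝ), (∀ p ∈ F, p.1 ≠ 0) ∧
      {z : Fin M → ℝ | ∑ i, |x i - z i| = ∑ i, |y i - z i|} ⊆
        ⋃ p ∈ F, {z : Fin M → ℝ | ∑ i, p.1 i * z i = p.2} := by
  classical
  set sgn : Bool → ℝ := fun b => if b then 1 else -1 with hsgn
  have hsgn_abs : ∀ t : ℝ, sgn (decide (0 ≤ t)) * t = |t| := by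
    intro t
    by_cases ht : 0 ≤ t
    · simp [sgn, ht, abs_of_nonneg ht]
    · simp [sgn, ht, abs_of_neg (lt_of_not_ge ht)]
  refine ⟨Finset.image (fun st : (Fin M → Bool) × (Fin M → Bool) =>
      ((fun i => sgn (st.2 i) - sgn (st.1 i)),
        ∑ i, (sgn (st.2 i) * y i - sgn (st.1 i) * x i)))
      (Finset.univ.filter (fun st => st.1 ≠ st.2)), ?_, ?_⟩
  · intro p hp
    simp only [Finset.mem_image, Finset.mem_filter, Finset.mem_univ, true_and] at hp
    obtain ⟨st, hne, rfl⟩ := hp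
    obtain ⟨i, hi⟩ := Function.ne_iff.mp hne
    intro h0
    have h0i : sgn (st.2 i) - sgn (st.1 i) = 0 := congrFun h0 i
    cases hb1 : st.1 i <;> cases hb2 : st.2 i <;> simp_all [sgn] <;> norm_num at h0i
  · intro z hz
    simp only [Set.mem_setOf_eq] at hz
    set σ : Fin M → Bool := fun i => decide (0 ≤ x i - z i) with hσ
    set τ : Fin M → Bool := fun i => decide (0 ≤ y i - z i) with hτ
    have key : ∑ i, sgn (σ i) * (x i - z i) = ∑ i, sgn (τ i) * (y i - z i) := by
      calc ∑ i, sgn (σ i) * (x i - z i) = ∑ i, |x i - z i| := by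
            exact Finset.sum_congr rfl fun i _ => hsgn_abs _
        _ = ∑ i, |y i - z i| := hz
        _ = ∑ i, sgn (τ i) * (y i - z i) :=
            (Finset.sum_congr rfl fun i _ => hsgn_abs _).symm
    have hne : σ ≠ τ := by
      intro hst
      apply h
      refine ⟨fun i => sgn (σ i), fun i => ?_, ?_⟩
      · rcases Bool.dichotomy (σ i) with hb | hb <;> simp [sgn, hb]
      · rw [← hst] at key
        calc ∑ i, sgn (σ i) * (x i - y i)
            = ∑ i, (sgn (σ i) * (x i - z i) - sgn (σ i) * (y i - z i)) :=
              Finset.sum_congr rfl fun i _ => by ring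
          _ = 0 := by rw [Finset.sum_sub_distrib, key, sub_self]
    simp only [Set.mem_iUnion, Set.mem_setOf_eq]
    refine ⟨_, Finset.mem_image.mpr ⟨(σ, τ), Finset.mem_filter.mpr ⟨Finset.mem_univ _, hne⟩, rfl⟩, ?_⟩
    have h0 : ∑ i, ((sgn (τ i) - sgn (σ i)) * z i - (sgn (τ i) * y i - sgn (σ i) * x i)) = 0 := by
      calc ∑ i, ((sgn (τ i) - sgn (σ i)) * z i - (sgn (τ i) * y i - sgn (σ i) * x i))
          = ∑ i, (sgn (σ i) * (x i - z i) - sgn (τ i) * (y i - z i)) :=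
            Finset.sum_congr rfl fun i _ => by ring
        _ = 0 := by rw [Finset.sum_sub_distrib, key, sub_self]
    rw [Finset.sum_sub_distrib] at h0
    exact sub_eq_zero.mp h0
end

section
/- Let S be a finite set of rankings, d: S × S → ℝ≥0 a metric, fix r, r₁, r₂ ∈ S distinct with d₁ = d(r,r₁) > 0 and d₂ = d(r,r₂) > 0, and ε > 0. Define x, y in the zero-sum hyperplane H by x_r = ε/d₁, x_{r₁} = −ε/d₁, y_r = ε/d₂, y_{r₂} = −ε/d₂, all other components 0. Then every z ∈ H such that z_r ≤ 0 and z_{r'} ≥ 0 for all r' ≠ r satisfies N(x − z) = N(y − z), where N is the Kantorovich–Rubinstein norm with ground metric d. -/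
lemma KR_eq {S : Type*} [Fintype S] [DecidableEq S] (d : S → S → ℝ)
    (r : S) (v : S → ℝ) (hvr : 0 ≤ v r) (hv : ∀ s, s ≠ r → v s ≤ 0)
    (hsum : ∑ s, v s = 0) :
    KR d v = ∑ r', max (-(v r')) 0 * d r r' := by
  have hmax : ∀ s, max (-(v s)) 0 = -(v s) + (if s = r then v r else 0) := by
    intro s
    by_cases h : s = r
    · subst h; simp [max_eq_right (neg_nonpos.mpr hvr)]
    · simp [h, max_eq_left (neg_nonneg.mpr (hv s h))]
  have hsum' : ∑ s, max (-(v s)) 0 = v r := by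
    simp only [hmax]
    rw [Finset.sum_add_distrib, Finset.sum_ite_eq' Finset.univ r (fun _ => v r)]
    have h0 : ∑ s : S, -v s = 0 := by
      rw [Finset.sum_neg_distrib, hsum, neg_zero]
    simp [h0]
  have hset : {c | ∃ A : S → S → ℝ, (∀ a b, 0 ≤ A a b) ∧
      (∀ a, ∑ b, A a b = max (v a) 0) ∧
      (∀ b, ∑ a, A a b = max (-v b) 0) ∧
      c = ∑ a, ∑ b, A a b * d a b} = {∑ r', max (-(v r')) 0 * d r r'} := by
    ext c
    simp only [Set.mem_setOf_eq, Set.mem_singleton_iff]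
    constructor
    · rintro ⟨A, hA0, hrow, hcol, rfl⟩
      have hzero : ∀ s, s ≠ r → ∀ r', A s r' = 0 := by
        intro s hs r'
        have h1 : ∑ b, A s b = 0 := by
          rw [hrow s, max_eq_right (hv s hs)]
        exact (Finset.sum_eq_zero_iff_of_nonneg (fun i _ => hA0 s i)).mp h1 r' (Finset.mem_univ r')
      have hAr : ∀ r', A r r' = max (-(v r')) 0 := by
        intro r'
        rw [← hcol r']
        exact (Finset.sum_eq_single_of_mem r (Finset.mem_univ r)
          (fun b _ hb => hzero b hb r')).symm
      rw [Finset.sum_eq_single_of_mem r (Finset.mem_univ r)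
        (fun b _ hb => by simp [hzero b hb])]
      exact Finset.sum_congr rfl (fun b _ => by rw [hAr])
    · rintro rfl
      refine ⟨fun s b => if s = r then max (-(v b)) 0 else 0, ?_, ?_, ?_, ?_⟩
      · intro a b
        dsimp only
        split
        · exact le_max_right _ _
        · exact le_refl 0
      · intro a
        dsimp only
        by_cases h : a = r
        · subst h; simpa [hsum'] using (max_eq_left hvr).symm
        · rw [max_eq_right (hv a h)]
          simp [h]
      · intro b
        dsimp only
        simp [Finset.sum_ite_eq' Finset.univ r (fun _ => max (-(v b)) 0)]
      · symm
        rw [Finset.sum_eq_single_of_mem r (Finset.mem_univ r)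
          (fun b _ hb => by simp [hb])]
        simp
  unfold KR
  rw [hset]
  exact csInf_singleton _

/-- The two points `x, y` of the zero-sum hyperplane defined from distinct rankings
`r, r₁, r₂` and `ε > 0` are equidistant (in the Kantorovich–Rubinstein norm) from every point
`z` of the hyperplane whose only nonpositive component is at `r`. -/
theorem stmt13 {S : Type*} [Fintype S] [DecidableEq S] (d : S → S → ℝ)
    (hd0 : ∀ r r', 0 ≤ d r r') (hdrefl : ∀ r, d r r = 0)
    (hdsymm : ∀ r r', d r r' = d r' r)
    (hdtri : ∀ r r' r'', d r r'' ≤ d r r' + d r' r'')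
    (hdsep : ∀ r r', d r r' = 0 → r = r')
    (r r₁ r₂ : S) (hr1 : r₁ ≠ r) (hr2 : r₂ ≠ r) (h12 : r₁ ≠ r₂)
    (eps : ℝ) (heps : 0 < eps)
    (d₁ d₂ : ℝ) (hd₁ : d₁ = d r r₁) (hd₂ : d₂ = d r r₂)
    (hd₁pos : 0 < d₁) (hd₂pos : 0 < d₂)
    (x y : S → ℝ)
    (hx : x = fun s => if s = r then eps / d₁ else if s = r₁ then -(eps / d₁) else 0)
    (hy : y = fun s => if s = r then eps / d₂ else if s = r₂ then -(eps / d₂) else 0)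
    (z : S → ℝ) (hzsum : ∑ s, z s = 0)
    (hzr : z r ≤ 0) (hzpos : ∀ r' ≠ r, 0 ≤ z r') :
    KR d (x - z) = KR d (y - z) := by
  have hd₁ne : d₁ ≠ 0 := ne_of_gt hd₁pos
  have hd₂ne : d₂ ≠ 0 := ne_of_gt hd₂pos
  have hxr : x r = eps / d₁ := by rw [hx]; simp
  have hyr : y r = eps / d₂ := by rw [hy]; simp
  have hxs : ∀ s, s ≠ r → x s ≤ 0 := by
    intro s hs; rw [hx]; simp only [hs, if_false]
    split
    · exact le_of_lt (neg_neg_iff_pos.mpr (div_pos heps hd₁pos))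
    · exact le_refl 0
  have hys : ∀ s, s ≠ r → y s ≤ 0 := by
    intro s hs; rw [hy]; simp only [hs, if_false]
    split
    · exact le_of_lt (neg_neg_iff_pos.mpr (div_pos heps hd₂pos))
    · exact le_refl 0
  have hxsum : ∑ s, x s = 0 := by
    have : ∀ s, x s = (if s = r then eps / d₁ else 0) + (if s = r₁ then -(eps / d₁) else 0) := by
      intro s
      rw [hx]
      by_cases h : s = r
      · subst h; simp [Ne.symm hr1]
      · by_cases h1 : s = r₁ <;> simp [h, h1, hr1]
    simp only [this]
    rw [Finset.sum_add_distrib, Finset.sum_ite_eq' Finset.univ r, Finset.sum_ite_eq' Finset.univ r₁]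
    simp
  have hysum : ∑ s, y s = 0 := by
    have : ∀ s, y s = (if s = r then eps / d₂ else 0) + (if s = r₂ then -(eps / d₂) else 0) := by
      intro s
      rw [hy]
      by_cases h : s = r
      · subst h; simp [Ne.symm hr2]
      · by_cases h1 : s = r₂ <;> simp [h, h1, hr2]
    simp only [this]
    rw [Finset.sum_add_distrib, Finset.sum_ite_eq' Finset.univ r, Finset.sum_ite_eq' Finset.univ r₂]
    simp
  have hKx : KR d (x - z) = ∑ r', max (-((x - z) r')) 0 * d r r' := by
    apply KR_eq d r
    · simp only [Pi.sub_apply, hxr]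
      have : 0 < eps / d₁ := div_pos heps hd₁pos
      linarith
    · intro s hs
      simp only [Pi.sub_apply]
      have := hxs s hs
      have := hzpos s hs
      linarith
    · simp [Finset.sum_sub_distrib, hxsum, hzsum]
  have hKy : KR d (y - z) = ∑ r', max (-((y - z) r')) 0 * d r r' := by
    apply KR_eq d r
    · simp only [Pi.sub_apply, hyr]
      have : 0 < eps / d₂ := div_pos heps hd₂pos
      linarith
    · intro s hs
      simp only [Pi.sub_apply]
      have := hys s hs
      have := hzpos s hs
      linarith
    · simp [Finset.sum_sub_distrib, hysum, hzsum]
  have hcx : ∑ r', max (-((x - z) r')) 0 * d r r'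
      = ∑ r', (z r' * d r r' + if r' = r₁ then eps else 0) := by
    apply Finset.sum_congr rfl
    intro s _
    by_cases h : s = r
    · subst h; simp [hdrefl, Ne.symm hr1]
    · by_cases h1 : s = r₁
      · subst h1
        have hz1 := hzpos s h
        rw [hx]
        simp only [Pi.sub_apply, h, if_false, if_pos rfl, if_true]
        rw [max_eq_left (by have : 0 < eps / d₁ := div_pos heps hd₁pos; linarith)]
        rw [← hd₁]
        field_simp
        ring
      · rw [hx]
        simp only [Pi.sub_apply, h, h1, if_false]
        rw [max_eq_left (by have := hzpos s h; linarith)]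
        simp
  have hcy : ∑ r', max (-((y - z) r')) 0 * d r r'
      = ∑ r', (z r' * d r r' + if r' = r₂ then eps else 0) := by
    apply Finset.sum_congr rfl
    intro s _
    by_cases h : s = r
    · subst h; simp [hdrefl, Ne.symm hr2]
    · by_cases h1 : s = r₂
      · subst h1
        have hz1 := hzpos s h
        rw [hy]
        simp only [Pi.sub_apply, h, if_false, if_pos rfl, if_true]
        rw [max_eq_left (by have : 0 < eps / d₂ := div_pos heps hd₂pos; linarith)]
        rw [← hd₂]
        field_simp
        ring
      · rw [hy]
        simp only [Pi.sub_apply, h, h1, if_false]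
        rw [max_eq_left (by have := hzpos s h; linarith)]
        simp
  rw [hKx, hKy, hcx, hcy]
  rw [Finset.sum_add_distrib, Finset.sum_add_distrib]
  simp [Finset.sum_ite_eq']
end

section
/- The decision problem PARTITION (given natural numbers z₁,…,z_M, decide whether some subset S ⊆ {1,…,M} satisfies Σ_{i∈S} z_i = Σ_{i∉S} z_i) reduces to LARGE-BISECTOR: setting x = z and y = 0, the ℓ^1-bisector of x and y in ℝ^M contains an open ball if and only if the PARTITION instance is a yes-instance. -/
/-!
Write `g_a(t) = |a - t| - |t|`, so that `w` lies on the bisector of `z` and `0` iff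
`∑ i, g_{z_i}(w_i) = 0`. For `a ≥ 0`, `g_a` equals `a` on `t ≤ 0`, `-a` on `t ≥ a`, and has
slope `-2` on `(0, a)`. If the bisector contains a ball around `c`, moving one coordinate of `c`
keeps the sum at `0`, so `g_{z_i}` is locally constant at `c_i`, forcing `c_i ∉ (0, z_i)`.
Hence `g_{z_i}(c_i) = ±z_i`, and the bisector equation at `c` is a partition of `z`.
Conversely, a partition `T` gives a ball of radius `1` around the point with coordinates
`z_i + 1` on `T` and `-1` off `T`, on which every `g_{z_i}` is flat.
-/

open Filter Topology Finset

section OneCoordinate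

variable {a t : ℝ}

lemma abs_sub_sub_abs_of_nonpos (ha : 0 ≤ a) (ht : t ≤ 0) : |a - t| - |t| = a := by
  rw [abs_of_nonneg (by linarith), abs_of_nonpos ht]; ring

lemma abs_sub_sub_abs_of_le (ha : 0 ≤ a) (hat : a ≤ t) : |a - t| - |t| = -a := by
  rw [abs_of_nonpos (by linarith), abs_of_nonneg (by linarith)]; ring

lemma abs_sub_sub_abs_of_mem_Ioo (ht : t ∈ Set.Ioo 0 a) : |a - t| - |t| = a - 2 * t := by
  rw [abs_of_pos (by linarith [ht.2]), abs_of_pos ht.1]; ring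

lemma notMem_Ioo_of_eventually_abs_sub_sub_abs_eq {x : ℝ}
    (h : ∀ᶠ t in 𝓝 x, |a - t| - |t| = |a - x| - |x|) : x ∉ Set.Ioo 0 a := by
  intro hx
  have h_eq : ∀ᶠ t in 𝓝 x, t = x := by
    filter_upwards [h, Ioo_mem_nhds hx.1 hx.2] with t ht htI
    rw [abs_sub_sub_abs_of_mem_Ioo htI, abs_sub_sub_abs_of_mem_Ioo hx] at ht
    linarith
  obtain ⟨t, ht, hne⟩ :=
    ((h_eq.filter_mono nhdsWithin_le_nhds).and (self_mem_nhdsWithin (s := {x}ᶜ))).exists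
  exact hne ht

end OneCoordinate

variable {ι : Type*} [Fintype ι] [DecidableEq ι]

lemma sum_abs_sub_eq_sum_abs_iff {a w : ι → ℝ} {T : Finset ι} (ha : 0 ≤ a)
    (hT : ∀ i ∈ T, a i ≤ w i) (hTc : ∀ i ∈ Tᶜ, w i ≤ 0) :
    ∑ i, |a i - w i| = ∑ i, |w i| ↔ ∑ i ∈ T, a i = ∑ i ∈ Tᶜ, a i := by
  rw [← sub_eq_zero, ← sum_sub_distrib, ← sum_add_sum_compl T,
    sum_congr rfl fun i hi => abs_sub_sub_abs_of_le (ha i) (hT i hi),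
    sum_congr rfl fun i hi => abs_sub_sub_abs_of_nonpos (ha i) (hTc i hi),
    sum_neg_distrib, neg_add_eq_zero]

lemma sum_abs_sub_sub_sum_abs_update (a c : ι → ℝ) (i : ι) (t : ℝ) :
    ∑ j, |a j - Function.update c i t j| - ∑ j, |Function.update c i t j| =
      (|a i - t| - |t|) + ∑ j ∈ univ \ {i}, (|a j - c j| - |c j|) := by
  rw [← sum_sub_distrib]
  simp only [Function.apply_update (fun j x => |a j - x| - |x|)]
  exact sum_update_of_mem (mem_univ i) _ _

lemma le_zero_or_le_of_bisector_mem_nhds {a c : ι → ℝ}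
    (h : {w : ι → ℝ | ∑ i, |a i - w i| = ∑ i, |w i|} ∈ 𝓝 c) (i : ι) :
    c i ≤ 0 ∨ a i ≤ c i := by
  have hline : ∀ᶠ t in 𝓝 (c i),
      ∑ j, |a j - Function.update c i t j| = ∑ j, |Function.update c i t j| := by
    have hcont : Continuous (Function.update c i) := continuous_const.update i continuous_id
    exact hcont.tendsto' _ _ (Function.update_eq_self i c) h
  have hprofile : ∀ᶠ t in 𝓝 (c i), |a i - t| - |t| = |a i - c i| - |c i| := by
    filter_upwards [hline] with t ht
    have hc := sum_abs_sub_sub_sum_abs_update a c i (c i)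
    rw [← sub_eq_zero, sum_abs_sub_sub_sum_abs_update] at ht
    rw [Function.update_eq_self, sub_eq_zero.mpr (mem_of_mem_nhds h : c ∈ _)] at hc
    linarith
  by_contra! hc
  exact notMem_Ioo_of_eventually_abs_sub_sub_abs_eq hprofile hc

lemma ball_subset_bisector {a : ι → ℝ} (ha : 0 ≤ a) {T : Finset ι}
    (hT : ∑ i ∈ T, a i = ∑ i ∈ Tᶜ, a i) :
    Metric.ball (fun i => if i ∈ T then a i + 1 else -1) 1 ⊆
      {w : ι → ℝ | ∑ i, |a i - w i| = ∑ i, |w i|} := by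
  intro w hw
  have hclose : ∀ i, |w i - if i ∈ T then a i + 1 else -1| < 1 := fun i =>
    (dist_le_pi_dist w _ i).trans_lt hw
  refine (sum_abs_sub_eq_sum_abs_iff ha (fun i hi => ?_) (fun i hi => ?_)).mpr hT
  · have := hclose i
    rw [if_pos hi] at this
    linarith [(abs_lt.mp this).1]
  · have := hclose i
    rw [if_neg (mem_compl.mp hi)] at this
    linarith [(abs_lt.mp this).2]

/-- Reduction of PARTITION to LARGE-BISECTOR: for natural numbers `z₁,…,z_M`, the `ℓ^1`
bisector of `x = z` and `y = 0` in `ℝ^M` contains an open ball if and only if some subset of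
indices `T` satisfies `∑_{i∈T} z_i = ∑_{i∉T} z_i`. -/
theorem stmt14 (M : ℕ) (z : Fin M → ℕ) :
    (∃ (c : Fin M → ℝ) (ρ : ℝ), 0 < ρ ∧
        Metric.ball c ρ ⊆ {w : Fin M → ℝ | ∑ i, |(z i : ℝ) - w i| = ∑ i, |w i|}) ↔
      ∃ T : Finset (Fin M), ∑ i ∈ T, z i = ∑ i ∈ Tᶜ, z i := by
  have hz : (0 : Fin M → ℝ) ≤ fun i => (z i : ℝ) := fun i => Nat.cast_nonneg (z i)
  constructor
  · rintro ⟨c, ρ, hρ, hball⟩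
    have hsides := le_zero_or_le_of_bisector_mem_nhds
      (mem_of_superset (Metric.ball_mem_nhds c hρ) hball)
    let T := univ.filter fun i => (z i : ℝ) ≤ c i
    have hT : ∑ i ∈ T, (z i : ℝ) = ∑ i ∈ Tᶜ, (z i : ℝ) :=
      (sum_abs_sub_eq_sum_abs_iff hz (fun i hi => (mem_filter.mp hi).2)
        (fun i hi => (hsides i).resolve_right (by simpa [T] using hi))).mp
        (hball (Metric.mem_ball_self hρ))
    exact ⟨T, by exact_mod_cast hT⟩
  · rintro ⟨T, hT⟩
    exact ⟨_, 1, one_pos, ball_subset_bisector hz (by exact_mod_cast hT)⟩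
end

section
/- Let d be an anonymous and homogeneous standard distance on elections (a hemimetric satisfying d(E,E)=0 and the triangle inequality, with d(E,E')=∞ when voter sets differ in size, invariant under voter permutations and under replication of electorates). Then the quotient distance on the simplex of vote distributions, defined as the infimum over admissible chains Σ d(E_i, E'_i), equals the single-step infimum: d̄(x,y) = inf { d(E,E') : E, E' have equal numbers of voters, and their vote distributions are x and y respectively }. -/
/-!
A chain `E₁ → E'₁ ~ E₂ → E'₂ ~ ⋯ → E'ₖ` can be shortened one link at a time. Given a single step
`E → F` followed by a step `G → H` with `F ~ G`, replicate `F` and `G` to a common number of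
voters (homogeneity leaves the distances unchanged); two elections of the same size with the same
vote distribution differ by a permutation of voters, so anonymity moves `G → H` to a step
`F → H'` with `H' ~ H` and the same distance. The triangle inequality then merges `E → F → H'`
into a single step of cost at most the sum.
-/

open scoped ENNReal

/-- An election on the fixed (finite) set `R` of rankings: a number of voters together with
their preferences. -/
def El (R : Type*) := Σ n : ℕ, Fin n → R

/-- The vote distribution of an election: the relative frequency of each ranking. -/
noncomputable def elDistr {R : Type*} [Fintype R] [DecidableEq R] (E : El R) : R → ℝ :=
  fun r => ((Finset.univ.filter fun i => E.2 i = r).card : ℝ) / E.1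

/-- The election `kE` obtained by replicating each voter of `E` `k` times. -/
def elRep {R : Type*} (k : ℕ) (E : El R) : El R :=
  ⟨k * E.1, fun i => E.2 i.modNat⟩

open Finset

section VoteDistribution

variable {R : Type*} [DecidableEq R]

lemma card_filter_modNat_eq (k : ℕ) {n : ℕ} (f : Fin n → R) (r : R) :
    #{i : Fin (k * n) | f i.modNat = r} = k * #{i | f i = r} :=
  calc #{i : Fin (k * n) | f i.modNat = r}
      = #((univ : Finset (Fin k)) ×ˢ univ.filter fun i => f i = r) :=
        card_equiv finProdFinEquiv.symm (by simp)
    _ = k * #{i | f i = r} := by simp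

variable [Fintype R]

lemma elDistr_elRep {k : ℕ} (hk : k ≠ 0) (E : El R) : elDistr (elRep k E) = elDistr E := by
  obtain ⟨n, f⟩ := E
  funext r
  show ((#{i : Fin (k * n) | f i.modNat = r} : ℕ) : ℝ) / (k * n : ℕ) = (#{i | f i = r} : ℝ) / n
  rw [card_filter_modNat_eq, Nat.cast_mul, Nat.cast_mul]
  exact mul_div_mul_left _ _ (Nat.cast_ne_zero.mpr hk : (k : ℝ) ≠ 0)

lemma elDistr_comp_perm {n : ℕ} (f : Fin n → R) (σ : Equiv.Perm (Fin n)) :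
    elDistr (⟨n, f ∘ σ⟩ : El R) = elDistr ⟨n, f⟩ := by
  funext r
  simp only [elDistr]
  congr 2
  exact card_equiv σ (by simp)

lemma exists_perm_of_elDistr_eq {n : ℕ} {f g : Fin n → R}
    (h : elDistr (⟨n, f⟩ : El R) = elDistr ⟨n, g⟩) : ∃ σ : Equiv.Perm (Fin n), g = f ∘ σ := by
  rcases eq_or_ne n 0 with rfl | hn
  · exact ⟨1, funext fun i => i.elim0⟩
  have hcard (r : R) : Fintype.card {i // g i = r} = Fintype.card {i // f i = r} := by
    have := congrFun h r
    simp only [elDistr, div_left_inj' (Nat.cast_ne_zero.mpr hn : (n : ℝ) ≠ 0), Nat.cast_inj] at this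
    simp only [Fintype.card_subtype, this]
  let σ := Equiv.ofFiberEquiv fun r => Fintype.equivOfCardEq (hcard r)
  exact ⟨σ, funext fun i => (Equiv.ofFiberEquiv_map _ i).symm⟩

lemma eq_zero_of_elDistr_eq {E F : El R} (h : elDistr E = elDistr F) (hE : E.1 = 0) :
    F.1 = 0 := by
  by_contra hF
  obtain ⟨i⟩ : Nonempty (Fin F.1) := Fin.pos_iff_nonempty.mp (Nat.pos_of_ne_zero hF)
  have hpos : 0 < elDistr F (F.2 i) :=
    div_pos (Nat.cast_pos.mpr (card_pos.mpr ⟨i, by simp⟩))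
      (Nat.cast_pos.mpr (Nat.pos_of_ne_zero hF))
  -- `elDistr E = 0` for the empty election `E`, through the convention `x / 0 = 0`.
  rw [← h] at hpos
  simp [elDistr, hE] at hpos

lemma exists_mul_eq_mul_of_elDistr_eq {E F : El R} (h : elDistr E = elDistr F) :
    ∃ a b : ℕ, 0 < a ∧ 0 < b ∧ a * E.1 = b * F.1 := by
  rcases eq_or_ne E.1 0 with hE | hE
  · exact ⟨1, 1, one_pos, one_pos, by simp [hE, eq_zero_of_elDistr_eq h hE]⟩
  · have hF : F.1 ≠ 0 := fun hF => hE (eq_zero_of_elDistr_eq h.symm hF)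
    exact ⟨F.1, E.1, Nat.pos_of_ne_zero hF, Nat.pos_of_ne_zero hE, Nat.mul_comm _ _⟩

end VoteDistribution

section ElectionDistance

variable {R : Type*}

def IsAnonymous (d : El R → El R → ℝ≥0∞) : Prop :=
  ∀ (n : ℕ) (π σ : Fin n → R) (g : Equiv.Perm (Fin n)),
    d ⟨n, π ∘ g⟩ ⟨n, σ ∘ g⟩ = d ⟨n, π⟩ ⟨n, σ⟩

def IsHomogeneous (d : El R → El R → ℝ≥0∞) : Prop :=
  ∀ k : ℕ, 0 < k → ∀ E F : El R, d (elRep k E) (elRep k F) = d E F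

variable [Fintype R] [DecidableEq R] {d : El R → El R → ℝ≥0∞}

lemma IsAnonymous.exists_elDistr_eq_dist_eq (hanon : IsAnonymous d) {F G H : El R}
    (hFG : F.1 = G.1) (hGH : G.1 = H.1) (h : elDistr F = elDistr G) :
    ∃ H' : El R, H'.1 = H.1 ∧ elDistr H' = elDistr H ∧ d F H' = d G H := by
  obtain ⟨n, f⟩ := F
  obtain ⟨_, g⟩ := G
  obtain ⟨_, h'⟩ := H
  cases hFG
  cases hGH
  obtain ⟨σ, rfl⟩ := exists_perm_of_elDistr_eq h.symm
  exact ⟨⟨n, h' ∘ σ⟩, rfl, elDistr_comp_perm h' σ, hanon n g h' σ⟩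

lemma exists_dist_le_add (htri : ∀ E F G, d E G ≤ d E F + d F G) (hanon : IsAnonymous d)
    (hhom : IsHomogeneous d) {E F G H : El R} (hEF : E.1 = F.1) (hGH : G.1 = H.1)
    (hFG : elDistr F = elDistr G) :
    ∃ E' H' : El R, E'.1 = H'.1 ∧ elDistr E' = elDistr E ∧ elDistr H' = elDistr H ∧
      d E' H' ≤ d E F + d G H := by
  obtain ⟨a, b, ha, hb, hab⟩ := exists_mul_eq_mul_of_elDistr_eq hFG
  obtain ⟨H', hH'₁, hH'₂, hH'₃⟩ :=
    hanon.exists_elDistr_eq_dist_eq (F := elRep a F) (G := elRep b G) (H := elRep b H) hab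
      (congrArg (b * ·) hGH)
      (by rw [elDistr_elRep ha.ne', elDistr_elRep hb.ne', hFG])
  refine ⟨elRep a E, H', ?_, elDistr_elRep ha.ne' E, by rw [hH'₂, elDistr_elRep hb.ne'], ?_⟩
  · simp only [elRep, hH'₁, hEF, hab, hGH]
  calc d (elRep a E) H' ≤ d (elRep a E) (elRep a F) + d (elRep a F) H' := htri _ _ _
    _ = d E F + d G H := by rw [hH'₃, hhom a ha, hhom b hb]

lemma exists_dist_le_sum (htri : ∀ E F G, d E G ≤ d E F + d F G) (hanon : IsAnonymous d)
    (hhom : IsHomogeneous d) :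
    ∀ {k : ℕ} (Es Fs : Fin (k + 1) → El R), (∀ i, (Es i).1 = (Fs i).1) →
      (∀ i : Fin k, elDistr (Fs i.castSucc) = elDistr (Es i.succ)) →
      ∃ E F : El R, E.1 = F.1 ∧ elDistr E = elDistr (Es 0) ∧
        elDistr F = elDistr (Fs (Fin.last k)) ∧ d E F ≤ ∑ i, d (Es i) (Fs i)
  | 0, Es, Fs, hsz, _ => ⟨Es 0, Fs 0, hsz 0, rfl, rfl, by simp⟩
  | k + 1, Es, Fs, hsz, hlink => by
    obtain ⟨E, F, hEF, hE, hF, hle⟩ :=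
      exists_dist_le_sum htri hanon hhom (fun i => Es i.castSucc) (fun i => Fs i.castSucc)
        (fun i => hsz _) (fun i => by simpa [← Fin.succ_castSucc] using hlink i.castSucc)
    obtain ⟨E', H', hE'H', hE', hH', hle'⟩ := exists_dist_le_add htri hanon hhom hEF
      (hsz (Fin.last (k + 1))) (hF.trans (by simpa using hlink (Fin.last k)))
    refine ⟨E', H', hE'H', hE'.trans (by simpa using hE), hH', ?_⟩
    rw [Fin.sum_univ_castSucc]
    exact hle'.trans (add_le_add_left hle _)

end ElectionDistance

theorem stmt15_general {R : Type*} [Fintype R] [DecidableEq R]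
    (d : El R → El R → ℝ≥0∞)
    (htri : ∀ E F G, d E G ≤ d E F + d F G)
    (hstd : ∀ E F : El R, E.1 ≠ F.1 → d E F = ⊤)
    (hanon : ∀ (n : ℕ) (π σ : Fin n → R) (g : Equiv.Perm (Fin n)),
      d ⟨n, π ∘ g⟩ ⟨n, σ ∘ g⟩ = d ⟨n, π⟩ ⟨n, σ⟩)
    (hhom : ∀ k : ℕ, 0 < k → ∀ E F : El R, d (elRep k E) (elRep k F) = d E F)
    (x y : R → ℝ) :
    sInf {c : ℝ≥0∞ | ∃ (k : ℕ) (Es Fs : Fin (k + 1) → El R),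
        elDistr (Es 0) = x ∧ elDistr (Fs (Fin.last k)) = y ∧
        (∀ i : Fin k, elDistr (Fs i.castSucc) = elDistr (Es i.succ)) ∧
        c = ∑ i, d (Es i) (Fs i)} =
      sInf {c : ℝ≥0∞ | ∃ E F : El R, E.1 = F.1 ∧
        elDistr E = x ∧ elDistr F = y ∧ c = d E F} := by
  apply le_antisymm
  · refine le_sInf ?_
    rintro _ ⟨E, F, -, hx, hy, rfl⟩
    refine sInf_le ?_
    exact ⟨0, fun _ => E, fun _ => F, hx, hy, Fin.elim0, by simp⟩
  · refine le_sInf ?_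
    rintro _ ⟨k, Es, Fs, hx, hy, hlink, rfl⟩
    by_cases hsz : ∀ i, (Es i).1 = (Fs i).1
    · obtain ⟨E, F, hEF, hE, hF, hle⟩ := exists_dist_le_sum htri hanon hhom Es Fs hsz hlink
      refine le_trans (sInf_le ?_) hle
      exact ⟨E, F, hEF, hE.trans hx, hF.trans hy, rfl⟩
    · obtain ⟨i, hi⟩ := not_forall.mp hsz
      rw [ENNReal.sum_eq_top.mpr ⟨i, mem_univ i, hstd _ _ hi⟩]
      exact le_top

/-- For an anonymous and homogeneous standard distance `d` on elections, the quotient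
distance on the simplex of vote distributions (infimum over admissible chains of
`∑ d(Eᵢ, E'ᵢ)`) equals the single-step infimum of `d(E, E')` over pairs of elections with
equal numbers of voters and vote distributions `x` and `y`. -/
theorem stmt15 {R : Type*} [Fintype R] [DecidableEq R]
    (d : El R → El R → ℝ≥0∞)
    (hrefl : ∀ E, d E E = 0)
    (htri : ∀ E F G, d E G ≤ d E F + d F G)
    (hstd : ∀ E F : El R, E.1 ≠ F.1 → d E F = ⊤)
    (hanon : ∀ (n : ℕ) (π σ : Fin n → R) (g : Equiv.Perm (Fin n)),
      d ⟨n, π ∘ g⟩ ⟨n, σ ∘ g⟩ = d ⟨n, π⟩ ⟨n, σ⟩)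
    (hhom : ∀ k : ℕ, 0 < k → ∀ E F : El R, d (elRep k E) (elRep k F) = d E F)
    (x y : R → ℝ) :
    sInf {c : ℝ≥0∞ | ∃ (k : ℕ) (Es Fs : Fin (k + 1) → El R),
        elDistr (Es 0) = x ∧ elDistr (Fs (Fin.last k)) = y ∧
        (∀ i : Fin k, elDistr (Fs i.castSucc) = elDistr (Es i.succ)) ∧
        c = ∑ i, d (Es i) (Fs i)} =
      sInf {c : ℝ≥0∞ | ∃ E F : El R, E.1 = F.1 ∧
        elDistr E = x ∧ elDistr F = y ∧ c = d E F} :=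
  stmt15_general d htri hstd hanon hhom x y
end

section
/- Let d be a metric on a finite set L of rankings, and for elections with n voters define the normalized ℓ^1-votewise distance d*(π,σ) = (1/n) Σ_i d(π_i, σ_i). Then the induced quotient distance on rational points of the simplex of vote distributions equals the 1-Wasserstein distance with ground metric d: for rational distributions x, y, inf over equal-size elections E, E' with distributions x, y of d*(E,E') equals inf over couplings A of x,y of Σ_{r,r'} A_{r,r'} d(r,r'). -/
/-- `x` is a probability distribution on the finite set `S`. -/
def IsProb {S : Type*} [Fintype S] (x : S → ℝ) : Prop :=
  (∀ s, 0 ≤ x s) ∧ ∑ s, x s = 1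

/-- `A` is a coupling of `x` and `y`: a nonnegative matrix with row marginals `x`
and column marginals `y`. -/
def IsCoupling {S : Type*} [Fintype S] (x y : S → ℝ) (A : S → S → ℝ) : Prop :=
  (∀ r r', 0 ≤ A r r') ∧ (∀ r, ∑ r', A r r' = x r) ∧ (∀ r', ∑ r, A r r' = y r')

/-- The 1-Wasserstein distance between distributions on a finite set, with ground cost `d`. -/
noncomputable def dW {S : Type*} [Fintype S] (d : S → S → ℝ) (x y : S → ℝ) : ℝ :=
  sInf {c | ∃ A : S → S → ℝ, IsCoupling x y A ∧ c = ∑ r, ∑ r', A r r' * d r r'}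


/-- The vote distribution of an election with `n` voters whose preferences are `π`. -/
noncomputable def voteDistr {L : Type*} [Fintype L] [DecidableEq L] (n : ℕ)
    (π : Fin n → L) : L → ℝ :=
  fun r => ((Finset.univ.filter fun i => π i = r).card : ℝ) / n

section Aux

open Finset

set_option linter.unusedSectionVars false

variable {L : Type*} [Fintype L] [DecidableEq L]

lemma count_fst' {n : ℕ} (f : Fin n → L × L) (r : L) :
    (univ.filter fun i => (f i).1 = r).card
      = ∑ r', (univ.filter fun i => f i = (r, r')).card := by
  simp only [Finset.card_filter]
  rw [Finset.sum_comm]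
  refine Finset.sum_congr rfl fun i _ => ?_
  by_cases h : (f i).1 = r
  · simp [Prod.ext_iff, h]
  · simp [Prod.ext_iff, h]

lemma count_snd' {n : ℕ} (f : Fin n → L × L) (r' : L) :
    (univ.filter fun i => (f i).2 = r').card
      = ∑ r, (univ.filter fun i => f i = (r, r')).card := by
  simp only [Finset.card_filter]
  rw [Finset.sum_comm]
  refine Finset.sum_congr rfl fun i _ => ?_
  by_cases h : (f i).2 = r'
  · simp [Prod.ext_iff, h]
  · simp [Prod.ext_iff, h]

lemma sum_fiber' {n : ℕ} (f : Fin n → L × L) (g : L × L → ℝ) :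
    ∑ i, g (f i) = ∑ p, ((univ.filter fun i => f i = p).card : ℝ) * g p := by
  have h : ∀ p : L × L, ((univ.filter fun i => f i = p).card : ℝ) * g p
      = ∑ i, if f i = p then g p else 0 := by
    intro p
    rw [Finset.card_filter]
    push_cast
    rw [Finset.sum_mul]
    simp [ite_mul]
  rw [Finset.sum_congr rfl fun p _ => h p, Finset.sum_comm]
  refine Finset.sum_congr rfl fun i _ => ?_
  simp

lemma exists_fn' (m : L × L → ℕ) (n : ℕ) (h : ∑ p, m p = n) :
    ∃ f : Fin n → L × L, ∀ p, (univ.filter fun i => f i = p).card = m p := by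
  have hcard : Fintype.card ((p : L × L) × Fin (m p)) = Fintype.card (Fin n) := by
    simp [Fintype.card_sigma, h]
  let e := Fintype.equivOfCardEq hcard
  refine ⟨fun i => (e.symm i).1, fun p => ?_⟩
  rw [← Fintype.card_subtype]
  have e1 : {i : Fin n // (e.symm i).1 = p} ≃ {t : (q : L × L) × Fin (m q) // t.1 = p} :=
    e.symm.subtypeEquiv fun i => Iff.rfl
  have e2 : {t : (q : L × L) × Fin (m q) // t.1 = p} ≃ Fin (m p) :=
    { toFun := fun t => Fin.cast (congrArg m t.2) t.1.2
      invFun := fun j => ⟨⟨p, j⟩, rfl⟩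
      left_inv := by rintro ⟨⟨q, j⟩, h⟩; subst h; rfl
      right_inv := fun j => rfl }
  rw [Fintype.card_congr (e1.trans e2), Fintype.card_fin]

lemma exists_nat_mul' (q : L × L → ℚ) (hq : ∀ p, 0 ≤ q p) :
    ∃ (n : ℕ) (m : L × L → ℕ), 0 < n ∧ ∀ p, (m p : ℚ) = n * q p := by
  have key : ∀ p, ∃ mp : ℕ, (mp : ℚ) = (∏ p', (q p').den : ℕ) * q p := by
    intro p
    obtain ⟨t, ht⟩ := Finset.dvd_prod_of_mem (fun p' => (q p').den) (Finset.mem_univ p)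
    refine ⟨(q p).num.toNat * t, ?_⟩
    have h0 : 0 ≤ (q p).num := Rat.num_nonneg.mpr (hq p)
    push_cast [Int.toNat_of_nonneg h0, ht]
    rw [mul_comm ((q p).den : ℚ) (t : ℚ), mul_assoc, Rat.den_mul_eq_num, mul_comm]
    congr 1
    exact_mod_cast Int.toNat_of_nonneg h0
  choose m hm using key
  exact ⟨∏ p', (q p').den, m, Finset.prod_pos fun p _ => (q p).pos, hm⟩

lemma realize_coupling' (d : L → L → ℝ) (x y : L → ℝ) (hx : IsProb x)
    (B : L × L → ℚ) (hB : IsCoupling x y (fun r r' => ((B (r, r')) : ℝ))) :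
    ∃ (n : ℕ), 0 < n ∧ ∃ π σ : Fin n → L, voteDistr n π = x ∧ voteDistr n σ = y ∧
      (∑ i, d (π i) (σ i)) / n = ∑ r, ∑ r', ((B (r, r') : ℝ)) * d r r' := by
  obtain ⟨hBnn, hBrow, hBcol⟩ := hB
  have hBq : ∀ p : L × L, 0 ≤ B p := by
    intro p
    have := hBnn p.1 p.2
    simp only [] at this
    exact_mod_cast this
  obtain ⟨n, m, hn, hm⟩ := exists_nat_mul' B hBq
  have hmR : ∀ p : L × L, (m p : ℝ) = (n : ℝ) * (B p : ℝ) := by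
    intro p
    exact_mod_cast congrArg (Rat.cast : ℚ → ℝ) (hm p)
  have hnR : (0 : ℝ) < n := by exact_mod_cast hn
  have hsum : ∑ p, m p = n := by
    have h1 : ∑ p : L × L, (m p : ℝ) = (n : ℝ) := by
      rw [Finset.sum_congr rfl fun p _ => hmR p, ← Finset.mul_sum]
      have : ∑ p : L × L, (B p : ℝ) = 1 := by
        rw [Fintype.sum_prod_type]
        have : ∀ r, ∑ r', (B (r, r') : ℝ) = x r := fun r => hBrow r
        rw [Finset.sum_congr rfl fun r _ => this r, hx.2]
      rw [this, mul_one]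
    exact_mod_cast h1
  obtain ⟨f, hf⟩ := exists_fn' m n hsum
  refine ⟨n, hn, fun i => (f i).1, fun i => (f i).2, ?_, ?_, ?_⟩
  · funext r
    show ((univ.filter fun i => (f i).1 = r).card : ℝ) / n = x r
    rw [count_fst' f r]
    push_cast
    rw [Finset.sum_congr rfl fun r' _ => by rw [hf (r, r')]]
    rw [Finset.sum_congr rfl fun r' _ => hmR (r, r'), ← Finset.mul_sum]
    rw [show ∑ r', (B (r, r') : ℝ) = x r from hBrow r]
    field_simp
  · funext r'
    show ((univ.filter fun i => (f i).2 = r').card : ℝ) / n = y r'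
    rw [count_snd' f r']
    push_cast
    rw [Finset.sum_congr rfl fun r _ => by rw [hf (r, r')]]
    rw [Finset.sum_congr rfl fun r _ => hmR (r, r'), ← Finset.mul_sum]
    rw [show ∑ r, (B (r, r') : ℝ) = y r' from hBcol r']
    field_simp
  · have := sum_fiber' f (fun p => d p.1 p.2)
    rw [this]
    rw [Finset.sum_congr rfl fun p _ => by rw [hf p]]
    rw [Finset.sum_congr rfl fun p _ => by rw [hmR p]]
    rw [Finset.sum_congr rfl fun p (_ : p ∈ univ) => (mul_assoc (n:ℝ) _ _),
      ← Finset.mul_sum]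
    rw [mul_div_assoc, mul_comm, div_mul_cancel₀ _ (ne_of_gt hnR)]
    rw [Fintype.sum_prod_type]

lemma empirical' (d : L → L → ℝ) (n : ℕ) (hn : 0 < n) (π σ : Fin n → L) :
    IsCoupling (voteDistr n π) (voteDistr n σ)
      (fun r r' => ((univ.filter fun i => (fun j => (π j, σ j)) i = (r, r')).card : ℝ) / n) ∧
    (∑ i, d (π i) (σ i)) / n
      = ∑ r, ∑ r',
        (((univ.filter fun i => (fun j => (π j, σ j)) i = (r, r')).card : ℝ) / n) * d r r' := by
  have hnR : (0 : ℝ) < n := by exact_mod_cast hn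
  set f : Fin n → L × L := fun j => (π j, σ j) with hfdef
  constructor
  · refine ⟨fun r r' => by positivity, fun r => ?_, fun r' => ?_⟩
    · rw [← Finset.sum_div]
      have : ∑ r', ((univ.filter fun i => f i = (r, r')).card : ℝ)
          = ((univ.filter fun i => (f i).1 = r).card : ℝ) := by
        rw [count_fst' f r]; push_cast; ring
      rw [this]
      rfl
    · rw [← Finset.sum_div]
      have : ∑ r, ((univ.filter fun i => f i = (r, r')).card : ℝ)
          = ((univ.filter fun i => (f i).2 = r').card : ℝ) := by
        rw [count_snd' f r']; push_cast; ring
      rw [this]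
      rfl
  · have h1 : ∑ i, d (π i) (σ i) = ∑ p : L × L,
        ((univ.filter fun i => f i = p).card : ℝ) * d p.1 p.2 :=
      sum_fiber' f (fun p => d p.1 p.2)
    rw [h1, Fintype.sum_prod_type, Finset.sum_div]
    refine Finset.sum_congr rfl fun r _ => ?_
    rw [Finset.sum_div]
    refine Finset.sum_congr rfl fun r' _ => ?_
    ring

lemma rounding' (d : L → L → ℝ) (hd0 : ∀ r r', 0 ≤ d r r')
    (x y : L → ℝ) (hx : IsProb x) (hy : IsProb y)
    (qx qy : L → ℚ) (hqx : ∀ r, x r = (qx r : ℝ)) (hqy : ∀ r, y r = (qy r : ℝ))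
    (A : L → L → ℝ) (hA : IsCoupling x y A) (ε : ℝ) (hε : 0 < ε) :
    ∃ B : L × L → ℚ, IsCoupling x y (fun r r' => (B (r, r') : ℝ)) ∧
      ∑ r, ∑ r', (B (r, r') : ℝ) * d r r' ≤ (∑ r, ∑ r', A r r' * d r r') + ε := by
  classical
  obtain ⟨hAnn, hArow, hAcol⟩ := hA
  set D : ℝ := ∑ r, ∑ r', d r r' with hD
  have hDnn : 0 ≤ D := Finset.sum_nonneg fun r _ => Finset.sum_nonneg fun r' _ => hd0 r r'
  have hdleD : ∀ r r', d r r' ≤ D := by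
    intro r r'
    calc d r r' ≤ ∑ r'', d r r'' :=
          Finset.single_le_sum (fun i _ => hd0 r i) (mem_univ r')
      _ ≤ D := Finset.single_le_sum
          (fun i (_ : i ∈ univ) => Finset.sum_nonneg fun j _ => hd0 i j) (mem_univ r)
  set C : ℝ := ((Fintype.card L : ℝ)) ^ 2 with hC
  have hC0 : 0 ≤ C := by positivity
  obtain ⟨N, hNgt⟩ := exists_nat_gt (C * D / ε)
  have hCD0 : 0 ≤ C * D / ε := by positivity
  have hN0 : (0 : ℝ) < N := lt_of_le_of_lt hCD0 hNgt
  have hCDN : C * D / N ≤ ε := by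
    rw [div_le_iff₀ hN0]
    rw [div_lt_iff₀ hε] at hNgt
    nlinarith
  set k : L × L → ℤ := fun p => ⌊(N : ℝ) * A p.1 p.2⌋ with hk
  set B0 : L × L → ℚ := fun p => (k p : ℚ) / (N : ℚ) with hB0def
  set B0R : L × L → ℝ := fun p => ((B0 p : ℚ) : ℝ) with hB0Rdef
  have hB0cast : ∀ p : L × L, B0R p = (k p : ℝ) / N := by
    intro p; simp only [hB0Rdef, hB0def]; push_cast; ring
  have hk0 : ∀ p : L × L, 0 ≤ k p := fun p =>
    Int.floor_nonneg.mpr (mul_nonneg (le_of_lt hN0) (hAnn p.1 p.2))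
  have hB0nn : ∀ p : L × L, 0 ≤ B0R p := by
    intro p
    rw [hB0cast]
    exact div_nonneg (by exact_mod_cast hk0 p) (le_of_lt hN0)
  have hB0le : ∀ p : L × L, B0R p ≤ A p.1 p.2 := by
    intro p
    rw [hB0cast, div_le_iff₀ hN0, mul_comm]
    exact Int.floor_le _
  have hB0ge : ∀ p : L × L, A p.1 p.2 - B0R p ≤ 1 / N := by
    intro p
    rw [hB0cast]
    have h1 := Int.lt_floor_add_one ((N : ℝ) * A p.1 p.2)
    have h2 : (N : ℝ) * A p.1 p.2 - (k p : ℝ) ≤ 1 := by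
      simp only [hk] at *
      linarith
    calc A p.1 p.2 - (k p : ℝ) / N = ((N : ℝ) * A p.1 p.2 - (k p : ℝ)) / N := by
          field_simp
      _ ≤ 1 / N := by gcongr
  set aq : L → ℚ := fun r => qx r - ∑ r', B0 (r, r') with haqdef
  set bq : L → ℚ := fun r' => qy r' - ∑ r, B0 (r, r') with hbqdef
  set Sq : ℚ := ∑ r, aq r with hSqdef
  set aR : L → ℝ := fun r => ((aq r : ℚ) : ℝ) with haRdef
  set bR : L → ℝ := fun r' => ((bq r' : ℚ) : ℝ) with hbRdef
  set SR : ℝ := ((Sq : ℚ) : ℝ) with hSRdef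
  have haR1 : ∀ r, aR r = x r - ∑ r', B0R (r, r') := by
    intro r
    simp only [haRdef, haqdef, hB0Rdef, hqx r]
    push_cast
    ring
  have hbR1 : ∀ r', bR r' = y r' - ∑ r, B0R (r, r') := by
    intro r'
    simp only [hbRdef, hbqdef, hB0Rdef, hqy r']
    push_cast
    ring
  have haR2 : ∀ r, aR r = ∑ r', (A r r' - B0R (r, r')) := by
    intro r
    rw [haR1, Finset.sum_sub_distrib, hArow r]
  have hbR2 : ∀ r', bR r' = ∑ r, (A r r' - B0R (r, r')) := by
    intro r'
    rw [hbR1, Finset.sum_sub_distrib, hAcol r']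
  have haRnn : ∀ r, 0 ≤ aR r := by
    intro r
    rw [haR2]
    exact Finset.sum_nonneg fun r' _ => sub_nonneg.mpr (hB0le (r, r'))
  have hbRnn : ∀ r', 0 ≤ bR r' := by
    intro r'
    rw [hbR2]
    exact Finset.sum_nonneg fun r _ => sub_nonneg.mpr (hB0le (r, r'))
  have hSR1 : SR = ∑ r, aR r := by
    simp only [hSRdef, hSqdef, haRdef]
    push_cast
    rfl
  have hSab : ∑ r, aR r = ∑ r', bR r' := by
    rw [Finset.sum_congr rfl fun r _ => haR1 r, Finset.sum_congr rfl fun r' _ => hbR1 r']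
    rw [Finset.sum_sub_distrib, Finset.sum_sub_distrib, hx.2, hy.2, Finset.sum_comm]
  have hSRnn : 0 ≤ SR := by
    rw [hSR1]; exact Finset.sum_nonneg fun r _ => haRnn r
  have hSRle : SR ≤ C / N := by
    rw [hSR1, Finset.sum_congr rfl fun r _ => haR2 r]
    calc ∑ r, ∑ r', (A r r' - B0R (r, r')) ≤ ∑ r : L, ∑ r' : L, 1 / (N : ℝ) := by
          gcongr with r _ r' _
          exact hB0ge (r, r')
      _ = C / N := by
          simp [Finset.sum_const, card_univ, hC]
          ring
  have hDSR : D * SR ≤ ε := by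
    calc D * SR ≤ D * (C / N) := by gcongr
      _ = C * D / N := by ring
      _ ≤ ε := hCDN
  by_cases hS0 : Sq = 0
  · -- no correction needed
    have hSR0 : SR = 0 := by rw [hSRdef, hS0]; norm_num
    have haR0 : ∀ r, aR r = 0 := by
      intro r
      have := (Finset.sum_eq_zero_iff_of_nonneg (fun r (_ : r ∈ univ) => haRnn r)).mp
        (by rw [← hSR1, hSR0]) r (mem_univ r)
      exact this
    have hbR0 : ∀ r', bR r' = 0 := by
      intro r'
      have hsum : ∑ r', bR r' = 0 := by rw [← hSab, ← hSR1, hSR0]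
      exact (Finset.sum_eq_zero_iff_of_nonneg (fun r (_ : r ∈ univ) => hbRnn r)).mp hsum r'
        (mem_univ r')
    refine ⟨B0, ⟨?_, ?_, ?_⟩, ?_⟩
    · intro r r'
      exact hB0nn (r, r')
    · intro r
      have := haR1 r
      rw [haR0 r] at this
      have : ∑ r', B0R (r, r') = x r := by linarith
      exact this
    · intro r'
      have := hbR1 r'
      rw [hbR0 r'] at this
      have : ∑ r, B0R (r, r') = y r' := by linarith
      exact this
    · have h1 : ∑ r, ∑ r', B0R (r, r') * d r r' ≤ ∑ r, ∑ r', A r r' * d r r' := by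
        refine Finset.sum_le_sum fun r _ => Finset.sum_le_sum fun r' _ => ?_
        exact mul_le_mul_of_nonneg_right (hB0le (r, r')) (hd0 r r')
      show ∑ r, ∑ r', B0R (r, r') * d r r' ≤ (∑ r, ∑ r', A r r' * d r r') + ε
      linarith
  · have hSRpos : 0 < SR := by
      rcases lt_or_eq_of_le hSRnn with h | h
      · exact h
      · exfalso; apply hS0
        have : SR = 0 := h.symm
        rw [hSRdef] at this
        exact_mod_cast this
    refine ⟨fun p => B0 p + aq p.1 * bq p.2 / Sq, ⟨?_, ?_, ?_⟩, ?_⟩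
    · intro r r'
      have hcast : ((B0 (r, r') + aq r * bq r' / Sq : ℚ) : ℝ)
          = B0R (r, r') + aR r * bR r' / SR := by
        simp only [hB0Rdef, haRdef, hbRdef, hSRdef]; push_cast; ring
      show (0:ℝ) ≤ ((B0 (r, r') + aq r * bq r' / Sq : ℚ) : ℝ)
      rw [hcast]
      have : 0 ≤ aR r * bR r' / SR :=
        div_nonneg (mul_nonneg (haRnn r) (hbRnn r')) (le_of_lt hSRpos)
      linarith [hB0nn (r, r')]
    · intro r
      have hcast : ∀ r', ((B0 (r, r') + aq r * bq r' / Sq : ℚ) : ℝ)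
          = B0R (r, r') + aR r * bR r' / SR := by
        intro r'; simp only [hB0Rdef, haRdef, hbRdef, hSRdef]; push_cast; ring
      show ∑ r', ((B0 (r, r') + aq r * bq r' / Sq : ℚ) : ℝ) = x r
      rw [Finset.sum_congr rfl fun r' _ => hcast r']
      rw [Finset.sum_add_distrib]
      have h1 : ∑ r', aR r * bR r' / SR = aR r := by
        rw [← Finset.sum_div, ← Finset.mul_sum, ← hSab, ← hSR1]
        field_simp
      rw [h1]
      have := haR1 r
      linarith
    · intro r'
      have hcast : ∀ r, ((B0 (r, r') + aq r * bq r' / Sq : ℚ) : ℝ)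
          = B0R (r, r') + aR r * bR r' / SR := by
        intro r; simp only [hB0Rdef, haRdef, hbRdef, hSRdef]; push_cast; ring
      show ∑ r, ((B0 (r, r') + aq r * bq r' / Sq : ℚ) : ℝ) = y r'
      rw [Finset.sum_congr rfl fun r _ => hcast r]
      rw [Finset.sum_add_distrib]
      have h1 : ∑ r, aR r * bR r' / SR = bR r' := by
        rw [← Finset.sum_div]
        rw [Finset.sum_congr rfl fun r (_ : r ∈ univ) => (mul_comm (aR r) (bR r'))]
        rw [← Finset.mul_sum, ← hSR1]
        field_simp
      rw [h1]
      have := hbR1 r'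
      linarith
    · have hcast : ∀ r r', ((B0 (r, r') + aq r * bq r' / Sq : ℚ) : ℝ)
          = B0R (r, r') + aR r * bR r' / SR := by
        intro r r'; simp only [hB0Rdef, haRdef, hbRdef, hSRdef]; push_cast; ring
      have hsplit : ∑ r, ∑ r', ((B0 (r, r') + aq r * bq r' / Sq : ℚ) : ℝ) * d r r'
          = (∑ r, ∑ r', B0R (r, r') * d r r')
            + ∑ r, ∑ r', (aR r * bR r' / SR) * d r r' := by
        rw [← Finset.sum_add_distrib]
        refine Finset.sum_congr rfl fun r _ => ?_
        rw [← Finset.sum_add_distrib]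
        refine Finset.sum_congr rfl fun r' _ => ?_
        rw [hcast r r']
        ring
      show ∑ r, ∑ r', ((B0 (r, r') + aq r * bq r' / Sq : ℚ) : ℝ) * d r r'
          ≤ (∑ r, ∑ r', A r r' * d r r') + ε
      rw [hsplit]
      have h1 : ∑ r, ∑ r', B0R (r, r') * d r r' ≤ ∑ r, ∑ r', A r r' * d r r' := by
        refine Finset.sum_le_sum fun r _ => Finset.sum_le_sum fun r' _ => ?_
        exact mul_le_mul_of_nonneg_right (hB0le (r, r')) (hd0 r r')
      have h2 : ∑ r, ∑ r', (aR r * bR r' / SR) * d r r' ≤ D * SR := by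
        calc ∑ r, ∑ r', (aR r * bR r' / SR) * d r r'
            ≤ ∑ r, ∑ r', (aR r * bR r' / SR) * D := by
              gcongr with r _ r' _
              · exact div_nonneg (mul_nonneg (haRnn r) (hbRnn r')) (le_of_lt hSRpos)
              · exact hdleD r r'
          _ = ((∑ r, aR r) * (∑ r', bR r') / SR) * D := by
              rw [Finset.sum_mul_sum]
              rw [Finset.sum_div, Finset.sum_mul]
              refine Finset.sum_congr rfl fun r _ => ?_
              rw [Finset.sum_div, Finset.sum_mul]
          _ = SR * D := by
              rw [← hSab, ← hSR1]
              field_simp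
          _ = D * SR := mul_comm _ _
      linarith

end Aux

/-- The quotient distance on rational points of the simplex induced by the normalized
`ℓ^1`-votewise distance `d*(π,σ) = (1/n) ∑ᵢ d(πᵢ,σᵢ)` equals the 1-Wasserstein distance with
ground metric `d`. -/
theorem stmt16 {L : Type*} [Fintype L] [DecidableEq L] (d : L → L → ℝ)
    (hd0 : ∀ r r', 0 ≤ d r r') (hdrefl : ∀ r, d r r = 0)
    (hdsymm : ∀ r r', d r r' = d r' r)
    (hdtri : ∀ r r' r'', d r r'' ≤ d r r' + d r' r'')
    (hdsep : ∀ r r', d r r' = 0 → r = r')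
    (x y : L → ℝ) (hx : IsProb x) (hy : IsProb y)
    (hxQ : ∀ r, ∃ q : ℚ, x r = (q : ℝ)) (hyQ : ∀ r, ∃ q : ℚ, y r = (q : ℝ)) :
    sInf {c : ℝ | ∃ (n : ℕ), 0 < n ∧ ∃ π σ : Fin n → L,
        voteDistr n π = x ∧ voteDistr n σ = y ∧ c = (∑ i, d (π i) (σ i)) / n} =
      dW d x y := by
  classical
  choose qx hqx using hxQ
  choose qy hqy using hyQ
  set SL := {c : ℝ | ∃ (n : ℕ), 0 < n ∧ ∃ π σ : Fin n → L,
      voteDistr n π = x ∧ voteDistr n σ = y ∧ c = (∑ i, d (π i) (σ i)) / n} with hSLdef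
  set W := {c : ℝ | ∃ A : L → L → ℝ, IsCoupling x y A ∧ c = ∑ r, ∑ r', A r r' * d r r'}
    with hWdef
  have hprodQ : IsCoupling x y (fun r r' => (((fun p : L × L => qx p.1 * qy p.2) (r, r') : ℚ) : ℝ)) := by
    refine ⟨?_, ?_, ?_⟩
    · intro r r'
      show (0:ℝ) ≤ ((qx r * qy r' : ℚ) : ℝ)
      push_cast
      rw [← hqx r, ← hqy r']
      exact mul_nonneg (hx.1 r) (hy.1 r')
    · intro r
      show ∑ r', ((qx r * qy r' : ℚ) : ℝ) = x r
      have : ∀ r', ((qx r * qy r' : ℚ) : ℝ) = x r * y r' := by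
        intro r'; push_cast; rw [← hqx r, ← hqy r']
      rw [Finset.sum_congr rfl fun r' _ => this r', ← Finset.mul_sum, hy.2, mul_one]
    · intro r'
      show ∑ r, ((qx r * qy r' : ℚ) : ℝ) = y r'
      have : ∀ r, ((qx r * qy r' : ℚ) : ℝ) = x r * y r' := by
        intro r; push_cast; rw [← hqx r, ← hqy r']
      rw [Finset.sum_congr rfl fun r _ => this r, ← Finset.sum_mul, hx.2, one_mul]
  have hSLbdd : BddBelow SL := by
    refine ⟨0, fun c hc => ?_⟩
    obtain ⟨n, hn, π, σ, h1, h2, rfl⟩ := hc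
    have : (0:ℝ) ≤ ∑ i, d (π i) (σ i) := Finset.sum_nonneg fun i _ => hd0 _ _
    positivity
  have hWbdd : BddBelow W := by
    refine ⟨0, fun c hc => ?_⟩
    obtain ⟨A, hA, rfl⟩ := hc
    exact Finset.sum_nonneg fun r _ => Finset.sum_nonneg fun r' _ =>
      mul_nonneg (hA.1 r r') (hd0 r r')
  have hWne : W.Nonempty :=
    ⟨_, ⟨fun r r' => (((qx r * qy r' : ℚ)) : ℝ), hprodQ, rfl⟩⟩
  have hSLne : SL.Nonempty := by
    obtain ⟨n, hn, π, σ, h1, h2, h3⟩ :=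
      realize_coupling' d x y hx (fun p : L × L => qx p.1 * qy p.2) hprodQ
    exact ⟨(∑ i, d (π i) (σ i)) / n, ⟨n, hn, π, σ, h1, h2, rfl⟩⟩
  show sInf SL = dW d x y
  have hdWeq : dW d x y = sInf W := rfl
  rw [hdWeq]
  apply le_antisymm
  · refine le_csInf hWne fun c hc => ?_
    obtain ⟨A, hA, rfl⟩ := hc
    refine le_of_forall_pos_le_add fun ε hε => ?_
    obtain ⟨B, hBcoup, hBcost⟩ := rounding' d hd0 x y hx hy qx qy hqx hqy A hA ε hε
    obtain ⟨n, hn, π, σ, h1, h2, h3⟩ := realize_coupling' d x y hx B hBcoup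
    have hmem : (∑ i, d (π i) (σ i)) / n ∈ SL := ⟨n, hn, π, σ, h1, h2, rfl⟩
    calc sInf SL ≤ (∑ i, d (π i) (σ i)) / n := csInf_le hSLbdd hmem
      _ = ∑ r, ∑ r', (B (r, r') : ℝ) * d r r' := h3
      _ ≤ (∑ r, ∑ r', A r r' * d r r') + ε := hBcost
  · refine csInf_le_csInf hWbdd hSLne ?_
    rintro c ⟨n, hn, π, σ, h1, h2, rfl⟩
    obtain ⟨hcoup, hcost⟩ := empirical' d n hn π σ
    rw [h1, h2] at hcoup
    exact ⟨_, hcoup, hcost⟩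
end
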